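/- arXiv:1310.0291 — 3 statements merged into one kernel-verified Lean document; each statement's English description precedes it below -/
import Mathlib

section
/- Regret identity for the Poissonian loss: under the hypotheses above with Q̂ = E[Q|𝒢] and Z a positive 𝒢-measurable estimator (with all relevant integrability), E[l(Q, Z)] − E[l(Q, Q̂)] = E[l(Q̂, Z)], where l(q, q̌) = q·log(q/q̌) − q + q̌. -/
/-!
Expanding the logarithms, each of the three expected losses is a combination of
`E[q log q]`, `E[q log z]`, `E[q]` and `E[z]`. The only terms that do not cancel outright are
`E[Q̂]`, `E[Q̂ log Q̂]` and `E[Q̂ log Z]`, and the tower property together with the pull-out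
property (`log Q̂` and `log Z` are `𝒢`-measurable) replaces `Q̂` by `Q` in each of them.
-/

open MeasureTheory Real

noncomputable def poissonLoss (q z : ℝ) : ℝ := q * log (q / z) - q + z

lemma poissonLoss_of_nonneg_of_pos {q z : ℝ} (hq : 0 ≤ q) (hz : 0 < z) :
    poissonLoss q z = q * log q - q * log z - q + z := by
  rcases hq.eq_or_lt with rfl | hq
  · simp [poissonLoss]
  · rw [poissonLoss, log_div hq.ne' hz.ne']
    ring

section

variable {Ω : Type*} {m mΩ : MeasurableSpace Ω} {μ : Measure Ω}

lemma integral_poissonLoss {q z : Ω → ℝ} (hq : 0 ≤ᵐ[μ] q) (hz : ∀ᵐ ω ∂μ, 0 < z ω)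
    (hqlogq : Integrable (fun ω => q ω * log (q ω)) μ)
    (hqlogz : Integrable (fun ω => q ω * log (z ω)) μ)
    (hqi : Integrable q μ) (hzi : Integrable z μ) :
    ∫ ω, poissonLoss (q ω) (z ω) ∂μ
      = ∫ ω, q ω * log (q ω) ∂μ - ∫ ω, q ω * log (z ω) ∂μ - ∫ ω, q ω ∂μ + ∫ ω, z ω ∂μ := by
  have hexpand : (fun ω => poissonLoss (q ω) (z ω)) =ᵐ[μ]
      fun ω => q ω * log (q ω) - q ω * log (z ω) - q ω + z ω := by
    filter_upwards [hq, hz] with ω hqω hzω using poissonLoss_of_nonneg_of_pos hqω hzω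
  rw [integral_congr_ae hexpand, integral_add (by fun_prop) hzi,
    integral_sub (by fun_prop) hqi, integral_sub hqlogq hqlogz]

lemma integrable_condExp_mul_of_stronglyMeasurable {f g : Ω → ℝ} (hg : StronglyMeasurable[m] g)
    (hfg : Integrable (fun ω => f ω * g ω) μ) (hf : Integrable f μ) :
    Integrable (fun ω => μ[f|m] ω * g ω) μ :=
  integrable_condExp.congr (condExp_mul_of_stronglyMeasurable_right hg hfg hf)

lemma integral_condExp_mul_of_stronglyMeasurable (hm : m ≤ mΩ) [SigmaFinite (μ.trim hm)]
    {f g : Ω → ℝ} (hg : StronglyMeasurable[m] g)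
    (hfg : Integrable (fun ω => f ω * g ω) μ) (hf : Integrable f μ) :
    ∫ ω, μ[f|m] ω * g ω ∂μ = ∫ ω, f ω * g ω ∂μ :=
  calc ∫ ω, μ[f|m] ω * g ω ∂μ = ∫ ω, μ[f * g|m] ω ∂μ :=
        integral_congr_ae (condExp_mul_of_stronglyMeasurable_right hg hfg hf).symm
    _ = ∫ ω, f ω * g ω ∂μ := integral_condExp hm

end

/-- Regret identity for the Poissonian loss `l(q, q̌) = q·log(q/q̌) − q + q̌`: with
`Q̂ = E[Q|m]` and `Z` a positive `m`-measurable estimator,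
`E[l(Q, Z)] − E[l(Q, Q̂)] = E[l(Q̂, Z)]`. -/
theorem poisson_loss_regret_identity {Ω : Type*} {mΩ : MeasurableSpace Ω}
    {μ : Measure Ω} [IsProbabilityMeasure μ] {m : MeasurableSpace Ω} (hm : m ≤ mΩ)
    (Q Z : Ω → ℝ)
    (hQ0 : 0 ≤ᵐ[μ] Q) (hQint : Integrable Q μ)
    (hQlog : Integrable (fun ω => Q ω * Real.log (Q ω)) μ)
    (hZm : StronglyMeasurable[m] Z) (hZpos : ∀ᵐ ω ∂μ, 0 < Z ω)
    (hZint : Integrable Z μ)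
    (hQlogZ : Integrable (fun ω => Q ω * Real.log (Z ω)) μ)
    (hcpos : ∀ᵐ ω ∂μ, 0 < (μ[Q|m]) ω)
    (hQlogc : Integrable (fun ω => Q ω * Real.log ((μ[Q|m]) ω)) μ) :
    (∫ ω, (Q ω * Real.log (Q ω / Z ω) - Q ω + Z ω) ∂μ)
        - ∫ ω, (Q ω * Real.log (Q ω / (μ[Q|m]) ω) - Q ω + (μ[Q|m]) ω) ∂μ
      = ∫ ω, ((μ[Q|m]) ω * Real.log ((μ[Q|m]) ω / Z ω) - (μ[Q|m]) ω + Z ω) ∂μ := by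
  set c := μ[Q|m]
  have hlogZ : StronglyMeasurable[m] fun ω => log (Z ω) :=
    hZm.measurable.log.stronglyMeasurable
  have hlogc : StronglyMeasurable[m] fun ω => log (c ω) :=
    stronglyMeasurable_condExp.measurable.log.stronglyMeasurable
  show ∫ ω, poissonLoss (Q ω) (Z ω) ∂μ - ∫ ω, poissonLoss (Q ω) (c ω) ∂μ
    = ∫ ω, poissonLoss (c ω) (Z ω) ∂μ
  rw [integral_poissonLoss hQ0 hZpos hQlog hQlogZ hQint hZint,
    integral_poissonLoss hQ0 hcpos hQlog hQlogc hQint integrable_condExp,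
    integral_poissonLoss (hcpos.mono fun _ h => h.le) hZpos
      (integrable_condExp_mul_of_stronglyMeasurable hlogc hQlogc hQint)
      (integrable_condExp_mul_of_stronglyMeasurable hlogZ hQlogZ hQint) integrable_condExp hZint,
    integral_condExp hm, integral_condExp_mul_of_stronglyMeasurable hm hlogc hQlogc hQint,
    integral_condExp_mul_of_stronglyMeasurable hm hlogZ hQlogZ hQint]
  ring
end

section
/- Compensation identity: with notation as above, for any probability measure Q with P_θ ≪ Q for π-a.e. θ, ∫ D(P_θ‖Q) dπ(θ) = ∫ D(P_θ‖P̄) dπ(θ) + D(P̄‖Q), where P̄ = ∫ P_θ dπ(θ). -/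
/-!
With the family as a kernel `κ` and the mixture `P̄ = κ ∘ₘ π`: from `P_θ ≪ Q` a.e. we get
`P̄ ≪ Q`, and since `P̄` does not charge `{dP̄/dQ = 0}`, neither does `P_θ` for a.e. `θ`; hence
`P_θ ≪ P̄`. The chain rule
`dP_θ/dQ = dP_θ/dP̄ · dP̄/dQ` then gives `D(P_θ‖Q) = D(P_θ‖P̄) + ∫ log (dP̄/dQ) dP_θ`, and integrating
in `θ` (Fubini for `P̄ = ∫ P_θ dπ`) turns the last term into `D(P̄‖Q)`.
-/

open MeasureTheory

/-- Relative entropy `D(P‖P') = ∫ log(dP/dP') dP`. -/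
noncomputable def relEntropy {Ω : Type*} [MeasurableSpace Ω] (P P' : Measure Ω) : ℝ :=
  ∫ ω, Real.log ((P.rnDeriv P' ω).toReal) ∂P

open ProbabilityTheory Filter
open scoped ENNReal

namespace MeasureTheory.Measure

variable {α : Type*} {mα : MeasurableSpace α}

lemma AbsolutelyContinuous.withDensity_of_ae_ne_zero {ξ μ : Measure α} {f : α → ℝ≥0∞}
    (hf : AEMeasurable f μ) (hξμ : ξ ≪ μ) (hξf : ∀ᵐ x ∂ξ, f x ≠ 0) :
    ξ ≪ μ.withDensity f := by
  intro s hs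
  rw [withDensity_apply_eq_zero' hf] at hs
  refine measure_mono_null (fun x hx => ?_) (measure_union_null (hξμ hs) (ae_iff.mp hξf))
  by_cases hfx : f x = 0
  · exact Or.inr (by simpa using hfx)
  · exact Or.inl ⟨hfx, hx⟩

lemma log_rnDeriv_eq_add_ae {μ ν ξ : Measure α} [SigmaFinite μ] [SigmaFinite ν] [SigmaFinite ξ]
    (hμν : μ ≪ ν) (hνξ : ν ≪ ξ) :
    ∀ᵐ x ∂μ, Real.log (μ.rnDeriv ξ x).toReal
      = Real.log (μ.rnDeriv ν x).toReal + Real.log (ν.rnDeriv ξ x).toReal := by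
  have hμξ := hμν.trans hνξ
  filter_upwards [hμξ.ae_le (rnDeriv_mul_rnDeriv hμν), rnDeriv_pos hμν,
    hμν.ae_le (rnDeriv_lt_top μ ν), hμν.ae_le (rnDeriv_pos hνξ),
    hμξ.ae_le (rnDeriv_lt_top ν ξ)] with x hmul hμν_pos hμν_fin hνξ_pos hνξ_fin
  rw [← hmul, Pi.mul_apply, ENNReal.toReal_mul,
    Real.log_mul (ENNReal.toReal_pos hμν_pos.ne' hμν_fin.ne).ne'
      (ENNReal.toReal_pos hνξ_pos.ne' hνξ_fin.ne).ne']

variable {Θ Y : Type*} {mΘ : MeasurableSpace Θ} {mY : MeasurableSpace Y}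
  {π : Measure Θ} {κ : Kernel Θ Y}

lemma comp_absolutelyContinuous_of_ae {Q : Measure Y} (h : ∀ᵐ θ ∂π, κ θ ≪ Q) : κ ∘ₘ π ≪ Q := by
  have hconst := AbsolutelyContinuous.comp_left π (η := Kernel.const Θ Q) h
  rw [const_comp] at hconst
  exact hconst.trans smul_absolutelyContinuous

lemma ae_absolutelyContinuous_comp {Q : Measure Y} [SigmaFinite Q] [SigmaFinite (κ ∘ₘ π)]
    (h : ∀ᵐ θ ∂π, κ θ ≪ Q) : ∀ᵐ θ ∂π, κ θ ≪ κ ∘ₘ π := by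
  have hMQ := comp_absolutelyContinuous_of_ae h
  have hpos : ∀ᵐ θ ∂π, ∀ᵐ y ∂κ θ, (κ ∘ₘ π).rnDeriv Q y ≠ 0 :=
    ae_ae_of_ae_comp ((rnDeriv_pos hMQ).mono fun _ hy => hy.ne')
  filter_upwards [h, hpos] with θ hθQ hθpos
  rw [← withDensity_rnDeriv_eq _ _ hMQ]
  exact hθQ.withDensity_of_ae_ne_zero (measurable_rnDeriv _ _).aemeasurable hθpos

variable {E : Type*} [NormedAddCommGroup E] [NormedSpace ℝ E] {f : Y → E}

lemma integral_comp (hf : Integrable f (κ ∘ₘ π)) :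
    ∫ y, f y ∂(κ ∘ₘ π) = ∫ θ, ∫ y, f y ∂κ θ ∂π := by
  rw [comp_eq_comp_const_apply] at hf ⊢
  simpa using Kernel.integral_comp hf

lemma integrable_integral_of_integrable_comp (hf : Integrable f (κ ∘ₘ π)) :
    Integrable (fun θ => ∫ y, f y ∂κ θ) π := by
  rw [comp_eq_comp_const_apply] at hf
  simpa using hf.integral_comp

end MeasureTheory.Measure

open MeasureTheory.Measure

lemma relEntropy_eq_add_integral_log_rnDeriv {α : Type*} {mα : MeasurableSpace α}
    {μ ν ξ : Measure α} [SigmaFinite μ] [SigmaFinite ν] [SigmaFinite ξ]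
    (hμν : μ ≪ ν) (hνξ : ν ≪ ξ)
    (hμν_int : Integrable (fun x => Real.log (μ.rnDeriv ν x).toReal) μ)
    (hνξ_int : Integrable (fun x => Real.log (ν.rnDeriv ξ x).toReal) μ) :
    relEntropy μ ξ = relEntropy μ ν + ∫ x, Real.log (ν.rnDeriv ξ x).toReal ∂μ := by
  rw [relEntropy, relEntropy, ← integral_add hμν_int hνξ_int]
  exact integral_congr_ae (log_rnDeriv_eq_add_ae hμν hνξ)

theorem integral_relEntropy_eq_add {Θ Y : Type*} {mΘ : MeasurableSpace Θ} {mY : MeasurableSpace Y}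
    {κ : Kernel Θ Y} [IsFiniteKernel κ] {π : Measure Θ} [IsFiniteMeasure π]
    {Q : Measure Y} [SigmaFinite Q]
    (hac : ∀ᵐ θ ∂π, κ θ ≪ Q)
    (hint : ∀ᵐ θ ∂π,
      Integrable (fun y => Real.log (((κ θ).rnDeriv (κ ∘ₘ π) y).toReal)) (κ θ))
    (hint_comp : Integrable
      (fun y => Real.log (((κ ∘ₘ π).rnDeriv Q y).toReal)) (κ ∘ₘ π))
    (hint_relEntropy : Integrable (fun θ => relEntropy (κ θ) (κ ∘ₘ π)) π) :
    ∫ θ, relEntropy (κ θ) Q ∂π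
      = ∫ θ, relEntropy (κ θ) (κ ∘ₘ π) ∂π + relEntropy (κ ∘ₘ π) Q := by
  have hchain : ∀ᵐ θ ∂π, relEntropy (κ θ) Q = relEntropy (κ θ) (κ ∘ₘ π)
      + ∫ y, Real.log (((κ ∘ₘ π).rnDeriv Q y).toReal) ∂κ θ := by
    filter_upwards [ae_absolutelyContinuous_comp hac, hint,
      ae_integrable_of_integrable_comp hint_comp] with θ hθ hθ_int hθ_int_comp
    exact relEntropy_eq_add_integral_log_rnDeriv hθ (comp_absolutelyContinuous_of_ae hac)
      hθ_int hθ_int_comp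
  rw [integral_congr_ae hchain,
    integral_add hint_relEntropy (integrable_integral_of_integrable_comp hint_comp),
    ← integral_comp hint_comp, relEntropy]

theorem compensation_identity_general {Θ Y : Type*} [MeasurableSpace Θ]
    [MeasurableSpace Y] (P : Θ → Measure Y) (hPmeas : Measurable P)
    [∀ θ, IsProbabilityMeasure (P θ)]
    (π : Measure Θ) [IsProbabilityMeasure π]
    (Q : Measure Y) [IsProbabilityMeasure Q]
    (hac : ∀ᵐ θ ∂π, P θ ≪ Q)
    (hintMix : ∀ᵐ θ ∂π,
      Integrable (fun y => Real.log (((P θ).rnDeriv (π.bind P) y).toReal)) (P θ))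
    (hmixQ : Integrable
      (fun y => Real.log (((π.bind P).rnDeriv Q y).toReal)) (π.bind P))
    (hθMix : Integrable (fun θ => relEntropy (P θ) (π.bind P)) π) :
    ∫ θ, relEntropy (P θ) Q ∂π
      = (∫ θ, relEntropy (P θ) (π.bind P) ∂π) + relEntropy (π.bind P) Q := by
  let κ : Kernel Θ Y := ⟨P, hPmeas⟩
  have : IsMarkovKernel κ := ⟨fun θ => inferInstanceAs (IsProbabilityMeasure (P θ))⟩
  exact integral_relEntropy_eq_add (κ := κ) hac hintMix hmixQ hθMix

/-- Compensation identity: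
`∫ D(P_θ‖Q) dπ(θ) = ∫ D(P_θ‖P̄) dπ(θ) + D(P̄‖Q)` where `P̄ = ∫ P_θ dπ(θ)`. -/
theorem compensation_identity {Θ Y : Type*} [MeasurableSpace Θ]
    [MeasurableSpace Y] (P : Θ → Measure Y) (hPmeas : Measurable P)
    [∀ θ, IsProbabilityMeasure (P θ)]
    (π : Measure Θ) [IsProbabilityMeasure π]
    (Q : Measure Y) [IsProbabilityMeasure Q]
    (hac : ∀ᵐ θ ∂π, P θ ≪ Q)
    (hintQ : ∀ᵐ θ ∂π,
      Integrable (fun y => Real.log (((P θ).rnDeriv Q y).toReal)) (P θ))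
    (hintMix : ∀ᵐ θ ∂π,
      Integrable (fun y => Real.log (((P θ).rnDeriv (π.bind P) y).toReal)) (P θ))
    (hmixQ : Integrable
      (fun y => Real.log (((π.bind P).rnDeriv Q y).toReal)) (π.bind P))
    (hθQ : Integrable (fun θ => relEntropy (P θ) Q) π)
    (hθMix : Integrable (fun θ => relEntropy (P θ) (π.bind P)) π) :
    ∫ θ, relEntropy (P θ) Q ∂π
      = (∫ θ, relEntropy (P θ) (π.bind P) ∂π) + relEntropy (π.bind P) Q :=
  compensation_identity_general P hPmeas π Q hac hintMix hmixQ hθMix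
end

section
/- Finite redundancy-capacity theorem: let Θ be a finite set and (P_θ)_{θ∈Θ} probability measures on a finite set Y. Then min over probability measures Q on Y of max over θ of D(P_θ‖Q) equals max over priors π on Θ of I_π(θ;Y), where I_π(θ;Y) = Σ_θ π(θ) D(P_θ‖P̄_π) and P̄_π = Σ_θ π(θ) P_θ. -/
/-!
For every prior `π` and every `Q`, the compensation identity
`∑ π(θ) D(P_θ‖Q) = I_π + D(P̄_π‖Q)` shows that the `π`-average of the redundancies of `Q`
is at least `I_π`, so the capacity is at most the minimax redundancy.

Conversely, `I_π = H(P̄_π) - ∑ π(θ) H(P_θ)` is continuous, so it attains its maximum on the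
simplex at some `π*`. Comparing `I` at `π*` and at `(1 - t) π* + t δ_θ` through the
compensation identity gives `D(P_θ‖(1 - t) P̄_{π*} + t P_θ) ≤ I_{π*}` for `0 < t < 1`.
This forces `P_θ ≪ P̄_{π*}` (otherwise the left side grows like `-log t`), and then letting
`t → 0` gives `D(P_θ‖P̄_{π*}) ≤ I_{π*}` for every `θ`: the mixture `P̄_{π*}` has redundancy
at most the capacity.
-/

open scoped ENNReal BigOperators

/-- Relative entropy between finitely supported distributions, valued in `ℝ≥0∞`
(`⊤` when absolute continuity fails). -/
noncomputable def finKL {Y : Type*} [Fintype Y] (p q : Y → ℝ) : ℝ≥0∞ :=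
  if ∀ y, q y = 0 → p y = 0 then
    ENNReal.ofReal (∑ y, p y * Real.log (p y / q y))
  else ⊤

open Finset Filter Topology
open Real (log negMulLog)

namespace FiniteChannel

variable {Θ Y : Type*}

section KL

variable [Fintype Y]

/-- `finKL` without the absolute-continuity test: a term with `q y = 0` contributes `0`,
since `x / 0 = 0` and `log 0 = 0`. -/
noncomputable def klSum (p q : Y → ℝ) : ℝ := ∑ y, p y * log (p y / q y)

lemma finKL_of_absCont {p q : Y → ℝ} (h : ∀ y, q y = 0 → p y = 0) :
    finKL p q = ENNReal.ofReal (klSum p q) :=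
  if_pos h

lemma finKL_of_not_absCont {p q : Y → ℝ} (h : ¬ ∀ y, q y = 0 → p y = 0) : finKL p q = ⊤ :=
  if_neg h

lemma sub_le_mul_log_div {a b : ℝ} (ha : 0 ≤ a) (hb : 0 ≤ b) (hab : b = 0 → a = 0) :
    a - b ≤ a * log (a / b) := by
  rcases hb.eq_or_lt with rfl | hb
  · simp [hab rfl]
  calc a - b = b * (a / b - 1) := by field_simp
    _ ≤ b * (a / b * log (a / b)) :=
      mul_le_mul_of_nonneg_left (Real.self_sub_one_le_mul_log (div_nonneg ha hb.le)) hb.le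
    _ = a * log (a / b) := by field_simp

theorem klSum_nonneg {p q : Y → ℝ} (hp : p ∈ stdSimplex ℝ Y) (hq : q ∈ stdSimplex ℝ Y)
    (hac : ∀ y, q y = 0 → p y = 0) : 0 ≤ klSum p q := by
  have h := sum_le_sum fun y (_ : y ∈ univ) => sub_le_mul_log_div (hp.1 y) (hq.1 y) (hac y)
  rwa [sum_sub_distrib, hp.2, hq.2, sub_self] at h

lemma sum_mul_log_sub_le_klSum {p q : Y → ℝ} (hp : p ∈ stdSimplex ℝ Y)
    (hq : q ∈ stdSimplex ℝ Y) (y₀ : Y) :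
    ∑ y, p y * log (p y) - p y₀ * log (q y₀) ≤ klSum p q := by
  have hterm : ∀ y, p y * log (p y) - p y * log (q y) ≤ p y * log (p y / q y) := by
    intro y
    rcases (hq.1 y).eq_or_lt with hqy | hqy
    · have := Real.mul_log_nonpos (hp.1 y) (mem_Icc_of_mem_stdSimplex hp y).2
      simp [← hqy, this]
    rcases (hp.1 y).eq_or_lt with hpy | hpy
    · simp [← hpy]
    rw [Real.log_div hpy.ne' hqy.ne', mul_sub]
  have hdrop : ∑ y, p y * log (q y) ≤ p y₀ * log (q y₀) := by
    classical
    rw [← add_sum_erase _ _ (mem_univ y₀)]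
    exact add_le_of_nonpos_right (sum_nonpos fun y _ => mul_nonpos_of_nonneg_of_nonpos (hp.1 y)
      (Real.log_nonpos (hq.1 y) (mem_Icc_of_mem_stdSimplex hq y).2))
  have := sum_le_sum fun y (_ : y ∈ univ) => hterm y
  rw [sum_sub_distrib] at this
  unfold klSum
  linarith

end KL

section Mixture

variable [Fintype Θ]

def mixture (π : Θ → ℝ) (P : Θ → Y → ℝ) : Y → ℝ := fun y => ∑ θ, π θ * P θ y

lemma mixture_eq_sum_smul (π : Θ → ℝ) (P : Θ → Y → ℝ) : mixture π P = ∑ θ, π θ • P θ := by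
  ext y
  simp [mixture, Finset.sum_apply]

lemma eq_zero_of_mixture_eq_zero {π : Θ → ℝ} {P : Θ → Y → ℝ} (hπ : ∀ θ, 0 ≤ π θ)
    (hP : ∀ θ y, 0 ≤ P θ y) {θ : Θ} {y : Y} (hθ : π θ ≠ 0) (hy : mixture π P y = 0) :
    P θ y = 0 := by
  have := (sum_eq_zero_iff_of_nonneg fun θ _ => mul_nonneg (hπ θ) (hP θ y)).1 hy θ (mem_univ θ)
  exact (mul_eq_zero.1 this).resolve_left hθ

lemma mixture_smul_add_smul_single [DecidableEq Θ] (π : Θ → ℝ) (P : Θ → Y → ℝ) (a b : ℝ)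
    (θ₀ : Θ) : mixture (a • π + b • Pi.single θ₀ 1) P = a • mixture π P + b • P θ₀ := by
  ext y
  simp [mixture, add_mul, sum_add_distrib, mul_sum, Pi.single_apply, mul_assoc]

end Mixture

variable [Fintype Θ] [Fintype Y]

lemma mixture_mem_stdSimplex {π : Θ → ℝ} {P : Θ → Y → ℝ} (hπ : π ∈ stdSimplex ℝ Θ)
    (hP : ∀ θ, P θ ∈ stdSimplex ℝ Y) : mixture π P ∈ stdSimplex ℝ Y := by
  rw [mixture_eq_sum_smul]
  exact (convex_stdSimplex ℝ Y).sum_mem (fun θ _ => hπ.1 θ) hπ.2 fun θ _ => hP θ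

noncomputable def mutualInfo (P : Θ → Y → ℝ) (π : Θ → ℝ) : ℝ :=
  ∑ θ, π θ * klSum (P θ) (mixture π P)

theorem sum_mul_klSum_eq_mutualInfo_add {π : Θ → ℝ} {P : Θ → Y → ℝ} {q : Y → ℝ}
    (hπ : ∀ θ, 0 ≤ π θ) (hP : ∀ θ y, 0 ≤ P θ y) (hac : ∀ y, q y = 0 → mixture π P y = 0) :
    ∑ θ, π θ * klSum (P θ) q = mutualInfo P π + klSum (mixture π P) q := by
  set m := mixture π P
  have hterm : ∀ θ y, π θ * (P θ y * log (P θ y / q y))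
      = π θ * (P θ y * log (P θ y / m y)) + π θ * P θ y * log (m y / q y) := by
    intro θ y
    by_cases h : π θ * P θ y = 0
    · rcases mul_eq_zero.1 h with h | h <;> simp [h]
    obtain ⟨hθ, hy⟩ := mul_ne_zero_iff.1 h
    have hm : m y ≠ 0 := fun hm => hy (eq_zero_of_mixture_eq_zero hπ hP hθ hm)
    have hq : q y ≠ 0 := fun hq => hm (hac y hq)
    rw [Real.log_div hy hq, Real.log_div hy hm, Real.log_div hm hq]
    ring
  simp only [mutualInfo, klSum, mul_sum, hterm, sum_add_distrib]
  rw [sum_comm (f := fun θ y => π θ * P θ y * log (m y / q y))]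
  simp [m, mixture, sum_mul]

lemma mutualInfo_eq_entropy_sub {π : Θ → ℝ} {P : Θ → Y → ℝ} (hπ : ∀ θ, 0 ≤ π θ)
    (hP : ∀ θ y, 0 ≤ P θ y) :
    mutualInfo P π
      = ∑ y, negMulLog (mixture π P y) - ∑ θ, π θ * ∑ y, negMulLog (P θ y) := by
  have hterm : ∀ θ y, π θ * (P θ y * log (P θ y / mixture π P y))
      = π θ * (P θ y * log (P θ y)) - π θ * P θ y * log (mixture π P y) := by
    intro θ y
    by_cases h : π θ * P θ y = 0
    · rcases mul_eq_zero.1 h with h | h <;> simp [h]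
    obtain ⟨hθ, hy⟩ := mul_ne_zero_iff.1 h
    rw [Real.log_div hy fun hm => hy (eq_zero_of_mixture_eq_zero hπ hP hθ hm)]
    ring
  simp only [mutualInfo, klSum, mul_sum, hterm, sum_sub_distrib]
  rw [sum_comm (f := fun θ y => π θ * P θ y * log (mixture π P y))]
  simp only [mixture, negMulLog, neg_mul, mul_neg, sum_neg_distrib, sum_mul,
    mul_assoc]
  ring

lemma continuousOn_mutualInfo {P : Θ → Y → ℝ} (hP : ∀ θ y, 0 ≤ P θ y) :
    ContinuousOn (mutualInfo P) (stdSimplex ℝ Θ) :=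
  (Continuous.continuousOn (by unfold mixture; fun_prop)).congr fun _ hπ =>
    mutualInfo_eq_entropy_sub hπ.1 hP

lemma exists_isMaxOn_mutualInfo [Nonempty Θ] {P : Θ → Y → ℝ} (hP : ∀ θ y, 0 ≤ P θ y) :
    ∃ π ∈ stdSimplex ℝ Θ, IsMaxOn (mutualInfo P) (stdSimplex ℝ Θ) π := by
  classical
  exact (isCompact_stdSimplex ℝ Θ).exists_isMaxOn
    ⟨_, single_mem_stdSimplex ℝ (Classical.arbitrary Θ)⟩ (continuousOn_mutualInfo hP)

theorem klSum_le_mutualInfo_of_isMaxOn {π : Θ → ℝ} {P : Θ → Y → ℝ}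
    (hP : ∀ θ, P θ ∈ stdSimplex ℝ Y) (hπ : π ∈ stdSimplex ℝ Θ)
    (hmax : IsMaxOn (mutualInfo P) (stdSimplex ℝ Θ) π) (θ₀ : Θ) {t : ℝ} (ht : t ∈ Set.Ioo 0 1) :
    klSum (P θ₀) ((1 - t) • mixture π P + t • P θ₀) ≤ mutualInfo P π := by
  classical
  set m := mixture π P
  set mt := (1 - t) • m + t • P θ₀
  have hm := mixture_mem_stdSimplex hπ hP
  have hmt : mt ∈ stdSimplex ℝ Y :=
    convex_stdSimplex ℝ Y hm (hP θ₀) (by linarith [ht.2]) ht.1.le (by ring)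
  have hπt : (1 - t) • π + t • Pi.single θ₀ 1 ∈ stdSimplex ℝ Θ :=
    convex_stdSimplex ℝ Θ hπ (single_mem_stdSimplex ℝ θ₀) (by linarith [ht.2]) ht.1.le (by ring)
  have hac : ∀ y, mt y = 0 → m y = 0 := by
    intro y hy
    have h1 : 0 ≤ (1 - t) * m y := mul_nonneg (by linarith [ht.2]) (hm.1 y)
    have h2 : 0 ≤ t * P θ₀ y := mul_nonneg ht.1.le ((hP θ₀).1 y)
    have : (1 - t) * m y = 0 := by simp [mt] at hy; linarith
    exact (mul_eq_zero.1 this).resolve_left (by linarith [ht.2])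
  have hmix : mutualInfo P ((1 - t) • π + t • Pi.single θ₀ 1)
      = (1 - t) * (mutualInfo P π + klSum m mt) + t * klSum (P θ₀) mt := by
    rw [← sum_mul_klSum_eq_mutualInfo_add hπ.1 (fun θ => (hP θ).1) hac, mutualInfo,
      mixture_smul_add_smul_single]
    simp [add_mul, sum_add_distrib, mul_sum, Pi.single_apply, mul_assoc, mt, m]
  have hle : mutualInfo P _ ≤ mutualInfo P π := hmax hπt
  have hnn := klSum_nonneg hm hmt hac
  rw [hmix] at hle
  nlinarith [ht.1, ht.2]

lemma absCont_of_forall_klSum_le {p q : Y → ℝ} (hp : p ∈ stdSimplex ℝ Y)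
    (hq : q ∈ stdSimplex ℝ Y) {C : ℝ}
    (h : ∀ t ∈ Set.Ioo (0 : ℝ) 1, klSum p ((1 - t) • q + t • p) ≤ C) :
    ∀ y, q y = 0 → p y = 0 := by
  intro y₀ hqy₀
  by_contra hpy₀
  have hc : 0 < p y₀ := (hp.1 y₀).lt_of_ne' hpy₀
  set A := ∑ y, p y * log (p y) - p y₀ * log (p y₀)
  have hbound : ∀ t ∈ Set.Ioo (0 : ℝ) 1, A - p y₀ * log t ≤ C := by
    intro t ht
    have hqt : (1 - t) • q + t • p ∈ stdSimplex ℝ Y :=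
      convex_stdSimplex ℝ Y hq hp (by linarith [ht.2]) ht.1.le (by ring)
    have := (sum_mul_log_sub_le_klSum hp hqt y₀).trans (h t ht)
    simp only [Pi.add_apply, Pi.smul_apply, smul_eq_mul, hqy₀, mul_zero, zero_add] at this
    rw [Real.log_mul ht.1.ne' hc.ne'] at this
    linarith
  have hblow : Tendsto (fun t => A - p y₀ * log t) (𝓝[>] 0) atTop := by
    simpa [sub_eq_add_neg] using tendsto_atTop_add_const_left _ A
      (Real.tendsto_log_nhdsGT_zero.const_mul_atBot_of_neg (neg_neg_of_pos hc))
  obtain ⟨t, hlt, ht⟩ := ((hblow.eventually_gt_atTop C).and (Ioo_mem_nhdsGT one_pos)).exists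
  linarith [hbound t ht]

lemma klSum_le_of_forall_klSum_le {p q : Y → ℝ} (hac : ∀ y, q y = 0 → p y = 0) {C : ℝ}
    (h : ∀ t ∈ Set.Ioo (0 : ℝ) 1, klSum p ((1 - t) • q + t • p) ≤ C) : klSum p q ≤ C := by
  have hterm : ∀ y,
      ContinuousAt (fun t : ℝ => p y * log (p y / ((1 - t) * q y + t * p y))) 0 := by
    intro y
    by_cases hpy : p y = 0
    · simp only [hpy, zero_mul]
      exact continuousAt_const
    have hqy : q y ≠ 0 := fun hqy => hpy (hac y hqy)
    fun_prop (disch := simp [hpy, hqy])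
  have hcont : ContinuousAt (fun t : ℝ => klSum p ((1 - t) • q + t • p)) 0 :=
    tendsto_finsetSum _ fun y _ => hterm y
  have hlim : Tendsto (fun t : ℝ => klSum p ((1 - t) • q + t • p)) (𝓝[>] 0) (𝓝 (klSum p q)) := by
    simpa using hcont.tendsto.mono_left nhdsWithin_le_nhds
  refine le_of_tendsto hlim ?_
  filter_upwards [Ioo_mem_nhdsGT one_pos] with t ht using h t ht

theorem finKL_le_mutualInfo_of_isMaxOn {π : Θ → ℝ} {P : Θ → Y → ℝ}
    (hP : ∀ θ, P θ ∈ stdSimplex ℝ Y) (hπ : π ∈ stdSimplex ℝ Θ)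
    (hmax : IsMaxOn (mutualInfo P) (stdSimplex ℝ Θ) π) (θ₀ : Θ) :
    finKL (P θ₀) (mixture π P) ≤ ENNReal.ofReal (mutualInfo P π) := by
  have h := fun t (ht : t ∈ Set.Ioo (0 : ℝ) 1) => klSum_le_mutualInfo_of_isMaxOn hP hπ hmax θ₀ ht
  have hac := absCont_of_forall_klSum_le (hP θ₀) (mixture_mem_stdSimplex hπ hP) h
  rw [finKL_of_absCont hac]
  exact ENNReal.ofReal_le_ofReal (klSum_le_of_forall_klSum_le hac h)

lemma sum_ofReal_mul_finKL_eq {π : Θ → ℝ} {P : Θ → Y → ℝ} {q : Y → ℝ} (hπ : ∀ θ, 0 ≤ π θ)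
    (hP : ∀ θ, P θ ∈ stdSimplex ℝ Y) (hq : q ∈ stdSimplex ℝ Y)
    (hac : ∀ y, q y = 0 → mixture π P y = 0) :
    ∑ θ, ENNReal.ofReal (π θ) * finKL (P θ) q = ENNReal.ofReal (∑ θ, π θ * klSum (P θ) q) := by
  have hterm : ∀ θ, 0 ≤ π θ * klSum (P θ) q ∧
      ENNReal.ofReal (π θ) * finKL (P θ) q = ENNReal.ofReal (π θ * klSum (P θ) q) := by
    intro θ
    rcases eq_or_ne (π θ) 0 with hθ | hθ
    · simp [hθ]
    have hPq : ∀ y, q y = 0 → P θ y = 0 := fun y hy =>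
      eq_zero_of_mixture_eq_zero hπ (fun θ => (hP θ).1) hθ (hac y hy)
    exact ⟨mul_nonneg (hπ θ) (klSum_nonneg (hP θ) hq hPq),
      by rw [finKL_of_absCont hPq, ENNReal.ofReal_mul (hπ θ)]⟩
  rw [ENNReal.ofReal_sum_of_nonneg fun θ _ => (hterm θ).1]
  exact sum_congr rfl fun θ _ => (hterm θ).2

lemma sum_ofReal_mul_finKL_mixture {π : Θ → ℝ} {P : Θ → Y → ℝ} (hπ : π ∈ stdSimplex ℝ Θ)
    (hP : ∀ θ, P θ ∈ stdSimplex ℝ Y) :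
    ∑ θ, ENNReal.ofReal (π θ) * finKL (P θ) (mixture π P) = ENNReal.ofReal (mutualInfo P π) :=
  sum_ofReal_mul_finKL_eq hπ.1 hP (mixture_mem_stdSimplex hπ hP) fun _ h => h

theorem sum_ofReal_mul_finKL_mixture_le {π : Θ → ℝ} {P : Θ → Y → ℝ} {q : Y → ℝ}
    (hπ : π ∈ stdSimplex ℝ Θ) (hP : ∀ θ, P θ ∈ stdSimplex ℝ Y) (hq : q ∈ stdSimplex ℝ Y) :
    ∑ θ, ENNReal.ofReal (π θ) * finKL (P θ) (mixture π P)
      ≤ ∑ θ, ENNReal.ofReal (π θ) * finKL (P θ) q := by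
  by_cases hac : ∀ y, q y = 0 → mixture π P y = 0
  · have hm := mixture_mem_stdSimplex hπ hP
    rw [sum_ofReal_mul_finKL_mixture hπ hP, sum_ofReal_mul_finKL_eq hπ.1 hP hq hac,
      sum_mul_klSum_eq_mutualInfo_add hπ.1 (fun θ => (hP θ).1) hac]
    exact ENNReal.ofReal_le_ofReal (le_add_of_nonneg_right (klSum_nonneg hm hq hac))
  push Not at hac
  obtain ⟨y, hqy, hmy⟩ := hac
  obtain ⟨θ, -, hθ⟩ := exists_ne_zero_of_sum_ne_zero hmy
  have hπθ : 0 < π θ := (hπ.1 θ).lt_of_ne' (left_ne_zero_of_mul hθ)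
  have htop : finKL (P θ) q = ⊤ :=
    finKL_of_not_absCont fun h => right_ne_zero_of_mul hθ (h y hqy)
  have hsum : ∑ θ, ENNReal.ofReal (π θ) * finKL (P θ) q = ⊤ := ENNReal.sum_eq_top.2
    ⟨θ, mem_univ θ, by rw [htop, ENNReal.mul_top (ENNReal.ofReal_pos.2 hπθ).ne']⟩
  exact hsum ▸ le_top

lemma sum_ofReal_mul_le_iSup {π : Θ → ℝ} (hπ : π ∈ stdSimplex ℝ Θ) (f : Θ → ℝ≥0∞) :
    ∑ θ, ENNReal.ofReal (π θ) * f θ ≤ ⨆ θ, f θ :=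
  calc ∑ θ, ENNReal.ofReal (π θ) * f θ ≤ ∑ θ, ENNReal.ofReal (π θ) * ⨆ θ, f θ :=
        sum_le_sum fun θ _ => mul_le_mul_right (le_iSup f θ) _
    _ = ⨆ θ, f θ := by
        rw [← sum_mul, ← ENNReal.ofReal_sum_of_nonneg fun θ _ => hπ.1 θ, hπ.2,
          ENNReal.ofReal_one, one_mul]

end FiniteChannel

open FiniteChannel

theorem redundancy_capacity_general {Θ Y : Type*} [Fintype Θ] [Fintype Y]
    [Nonempty Θ]
    (P : Θ → Y → ℝ) (hP0 : ∀ θ y, 0 ≤ P θ y) (hP1 : ∀ θ, ∑ y, P θ y = 1) :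
    (⨅ q : {q : Y → ℝ // (∀ y, 0 ≤ q y) ∧ ∑ y, q y = 1},
        ⨆ θ, finKL (P θ) q.1)
      = ⨆ π : {π : Θ → ℝ // (∀ θ, 0 ≤ π θ) ∧ ∑ θ, π θ = 1},
          ∑ θ, ENNReal.ofReal (π.1 θ) *
            finKL (P θ) (fun y => ∑ θ', π.1 θ' * P θ' y) := by
  have hP : ∀ θ, P θ ∈ stdSimplex ℝ Y := fun θ => ⟨hP0 θ, hP1 θ⟩
  obtain ⟨π, hπ, hmax⟩ := exists_isMaxOn_mutualInfo hP0
  apply le_antisymm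
  · calc _ ≤ ⨆ θ, finKL (P θ) (mixture π P) :=
          iInf_le_of_le ⟨_, mixture_mem_stdSimplex hπ hP⟩ le_rfl
      _ ≤ ENNReal.ofReal (mutualInfo P π) := iSup_le (finKL_le_mutualInfo_of_isMaxOn hP hπ hmax)
      _ = ∑ θ, ENNReal.ofReal (π θ) * finKL (P θ) (mixture π P) :=
        (sum_ofReal_mul_finKL_mixture hπ hP).symm
      _ ≤ _ := le_iSup_of_le ⟨π, hπ⟩ le_rfl
  · exact iSup_le fun π => le_iInf fun q =>
      (sum_ofReal_mul_finKL_mixture_le π.2 hP q.2).trans (sum_ofReal_mul_le_iSup π.2 _)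

/-- Redundancy-capacity theorem (finite case): the min-max redundancy
`⨅_Q ⨆_θ D(P_θ‖Q)` equals the capacity `⨆_π I_π(θ;Y)`, where
`I_π(θ;Y) = ∑_θ π(θ) D(P_θ‖P̄_π)` and `P̄_π = ∑_θ π(θ) P_θ`. -/
theorem redundancy_capacity {Θ Y : Type*} [Fintype Θ] [Fintype Y]
    [Nonempty Θ] [Nonempty Y]
    (P : Θ → Y → ℝ) (hP0 : ∀ θ y, 0 ≤ P θ y) (hP1 : ∀ θ, ∑ y, P θ y = 1) :
    (⨅ q : {q : Y → ℝ // (∀ y, 0 ≤ q y) ∧ ∑ y, q y = 1},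
        ⨆ θ, finKL (P θ) q.1)
      = ⨆ π : {π : Θ → ℝ // (∀ θ, 0 ≤ π θ) ∧ ∑ θ, π θ = 1},
          ∑ θ, ENNReal.ofReal (π.1 θ) *
            finKL (P θ) (fun y => ∑ θ', π.1 θ' * P θ' y) :=
  redundancy_capacity_general P hP0 hP1
end
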